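/- arXiv:1905.10732 — 8 statements merged into one kernel-verified Lean document; each statement's English description precedes it below -/
import Mathlib

section
/- Let R ≥ 1 and define g(r, t₁, t₂) = r^{t₂/log t₂} / r^{t₁/log t₁} for t₁, t₂ > e and r > 0. Then there is a constant C > 0, depending only on R, such that 0 ≤ g(r, t₁, t₂) ≤ C whenever t₁, t₂ > R + 1, 0 ≤ t₂ − t₁ ≤ R, and 0 < r ≤ R. -/
theorem g_bounded (R : ℝ) (hR : 1 ≤ R) :
    ∃ C : ℝ, 0 < C ∧
      ∀ r t₁ t₂ : ℝ, Real.exp 1 < t₁ → Real.exp 1 < t₂ →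
        R + 1 < t₁ → R + 1 < t₂ → 0 ≤ t₂ - t₁ → t₂ - t₁ ≤ R → 0 < r → r ≤ R →
          0 ≤ r ^ (t₂ / Real.log t₂) / r ^ (t₁ / Real.log t₁) ∧
          r ^ (t₂ / Real.log t₂) / r ^ (t₁ / Real.log t₁) ≤ C := by
  refine ⟨R ^ (R : ℝ), Real.rpow_pos_of_pos (by linarith) _, ?_⟩
  intro r t₁ t₂ he1 he2 hR1 hR2 hsub0 hsubR hr hrR
  have ht1 : (0:ℝ) < t₁ := lt_trans (Real.exp_pos 1) he1
  have ht2 : (0:ℝ) < t₂ := lt_trans (Real.exp_pos 1) he2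
  have hle : t₁ ≤ t₂ := by linarith
  have hL1 : 1 < Real.log t₁ := by
    rw [show (1:ℝ) = Real.log (Real.exp 1) by simp]
    exact Real.log_lt_log (Real.exp_pos 1) he1
  have hL2 : 1 < Real.log t₂ := by
    rw [show (1:ℝ) = Real.log (Real.exp 1) by simp]
    exact Real.log_lt_log (Real.exp_pos 1) he2
  have hL12 : Real.log t₁ ≤ Real.log t₂ := Real.log_le_log ht1 hle
  set L1 := Real.log t₁
  set L2 := Real.log t₂
  set d := t₂ / L2 - t₁ / L1 with hd
  -- log t₂ - log t₁ ≤ (t₂ - t₁)/t₁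
  have hlogsub : L2 - L1 ≤ (t₂ - t₁) / t₁ := by
    have h := Real.log_le_sub_one_of_pos (show (0:ℝ) < t₂ / t₁ by positivity)
    rw [Real.log_div (ne_of_gt ht2) (ne_of_gt ht1)] at h
    have : t₂ / t₁ - 1 = (t₂ - t₁) / t₁ := by field_simp
    linarith [this ▸ h]
  have hd0 : 0 ≤ d := by
    have h1 : t₁ * (L2 - L1) ≤ t₂ - t₁ := by nlinarith [(le_div_iff₀ ht1).mp hlogsub]
    have h2 : t₁ * L2 ≤ t₂ * L1 := by nlinarith
    have h3 : t₁ / L1 ≤ t₂ / L2 := by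
      rw [div_le_div_iff₀ (by linarith) (by linarith)]
      linarith
    rw [hd]; linarith
  have hdR : d ≤ R := by
    have h1 : t₁ / L2 ≤ t₁ / L1 :=
      div_le_div_of_nonneg_left (le_of_lt ht1) (by linarith) hL12
    have h2 : d ≤ (t₂ - t₁) / L2 := by
      rw [hd, sub_div]
      linarith
    have h3 : (t₂ - t₁) / L2 ≤ t₂ - t₁ := by
      rw [div_le_iff₀ (by linarith)]
      nlinarith
    rw [hd] at *; linarith
  have hrw : r ^ (t₂ / L2) / r ^ (t₁ / L1) = r ^ d := by
    rw [hd, Real.rpow_sub hr]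
  rw [hrw]
  refine ⟨Real.rpow_nonneg (le_of_lt hr) _, ?_⟩
  rcases le_or_gt r 1 with hr1 | hr1
  · calc r ^ d ≤ 1 := Real.rpow_le_one (le_of_lt hr) hr1 hd0
      _ ≤ R ^ (R : ℝ) := Real.one_le_rpow hR (by linarith)
  · calc r ^ d ≤ R ^ d := Real.rpow_le_rpow (le_of_lt hr) hrR hd0
      _ ≤ R ^ (R : ℝ) := Real.rpow_le_rpow_of_exponent_le hR hdR
end

section
/- Let R ≥ 1 and define h(t₁, t₂) = (2t₂/log t₂)^{t₂(1 − 1/log t₂)} / (2t₁/log t₁)^{t₁(1 − 1/log t₁)} for t₁, t₂ > e. Then there is a constant C > 0, depending only on R, such that 0 ≤ h(t₁, t₂) ≤ C^{t₂/log t₂} whenever t₁, t₂ > R + 1 and 0 ≤ t₂ − t₁ ≤ R. -/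
set_option maxHeartbeats 2000000 in
theorem h_bounded (R : ℝ) (hR : 1 ≤ R) :
    ∃ C : ℝ, 0 < C ∧
      ∀ t₁ t₂ : ℝ, Real.exp 1 < t₁ → Real.exp 1 < t₂ →
        R + 1 < t₁ → R + 1 < t₂ → 0 ≤ t₂ - t₁ → t₂ - t₁ ≤ R →
          0 ≤ (2 * t₂ / Real.log t₂) ^ (t₂ * (1 - 1 / Real.log t₂)) /
                (2 * t₁ / Real.log t₁) ^ (t₁ * (1 - 1 / Real.log t₁)) ∧
          (2 * t₂ / Real.log t₂) ^ (t₂ * (1 - 1 / Real.log t₂)) /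
                (2 * t₁ / Real.log t₁) ^ (t₁ * (1 - 1 / Real.log t₁))
            ≤ C ^ (t₂ / Real.log t₂) := by
  refine ⟨Real.exp (9 * R), Real.exp_pos _, ?_⟩
  intro t₁ t₂ he₁ he₂ hR₁ hR₂ hd0 hdR
  have h1e : (1 : ℝ) < Real.exp 1 := by
    have := Real.add_one_le_exp 1; linarith
  have ht₁ : (1 : ℝ) < t₁ := lt_trans h1e he₁
  have ht₂ : (1 : ℝ) < t₂ := lt_trans h1e he₂
  have ht₁0 : (0 : ℝ) < t₁ := by linarith
  have ht₂0 : (0 : ℝ) < t₂ := by linarith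
  set L₁ := Real.log t₁ with hL₁def
  set L₂ := Real.log t₂ with hL₂def
  have hL₁ : 1 < L₁ := by
    have := Real.log_lt_log (Real.exp_pos 1) he₁
    rwa [Real.log_exp, ← hL₁def] at this
  have hL₂ : 1 < L₂ := by
    have := Real.log_lt_log (Real.exp_pos 1) he₂
    rwa [Real.log_exp, ← hL₂def] at this
  have hL₁0 : (0 : ℝ) < L₁ := by linarith
  have hL₂0 : (0 : ℝ) < L₂ := by linarith
  have h12 : t₁ ≤ t₂ := by linarith
  have hL12 : L₁ ≤ L₂ := by
    have := Real.log_le_log ht₁0 h12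
    rwa [← hL₁def, ← hL₂def] at this
  have hLt₁ : L₁ ≤ t₁ := by
    have := Real.log_le_sub_one_of_pos ht₁0
    rw [← hL₁def] at this; linarith
  have hLt₂ : L₂ ≤ t₂ := by
    have := Real.log_le_sub_one_of_pos ht₂0
    rw [← hL₂def] at this; linarith
  have hmono : t₁ / L₁ ≤ t₂ / L₂ := by
    have h := Real.log_div_self_antitoneOn (by exact he₁.le) (by exact he₂.le) h12
    simp only [← hL₁def, ← hL₂def] at h
    rw [div_le_div_iff₀ hL₁0 hL₂0]
    rw [div_le_div_iff₀ ht₂0 ht₁0] at h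
    nlinarith
  have hsq : L₂ ^ 2 ≤ 4 * t₂ := by
    have hs : L₂ ≤ 2 * Real.sqrt t₂ := by
      have h3 : Real.log (Real.sqrt t₂) = L₂ / 2 := by
        rw [Real.log_sqrt ht₂0.le, hL₂def]
      have h4 : Real.log (Real.sqrt t₂) ≤ Real.sqrt t₂ - 1 :=
        Real.log_le_sub_one_of_pos (Real.sqrt_pos.mpr ht₂0)
      rw [h3] at h4
      linarith
    nlinarith [Real.sq_sqrt ht₂0.le, Real.sqrt_nonneg t₂]
  have hlog2t : Real.log (2 * t₂) ≤ 1 + L₂ := by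
    have h2 : Real.log (2 * t₂) = Real.log 2 + L₂ := by
      rw [Real.log_mul (by norm_num) (by linarith), hL₂def]
    have hlog2 : Real.log 2 ≤ 1 := by
      have := Real.log_le_sub_one_of_pos (by norm_num : (0:ℝ) < 2); linarith
    linarith
  clear_value L₁ L₂
  set B₁ := 2 * t₁ / L₁ with hB₁def
  set B₂ := 2 * t₂ / L₂ with hB₂def
  set a₁ := t₁ * (1 - 1 / L₁) with ha₁def
  set a₂ := t₂ * (1 - 1 / L₂) with ha₂def
  clear_value B₁ B₂ a₁ a₂
  have hB₁0 : (0 : ℝ) < B₁ := by rw [hB₁def]; positivity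
  have hB₂0 : (0 : ℝ) < B₂ := by rw [hB₂def]; positivity
  have ha₁0 : (0 : ℝ) ≤ a₁ := by
    rw [ha₁def]
    have h5 : 1 / L₁ ≤ 1 := by rw [div_le_one hL₁0]; linarith
    nlinarith
  constructor
  · exact le_of_lt (div_pos (Real.rpow_pos_of_pos hB₂0 _) (Real.rpow_pos_of_pos hB₁0 _))
  have key : B₂ ^ a₂ / B₁ ^ a₁ = (B₂ / B₁) ^ a₁ * B₂ ^ (a₂ - a₁) := by
    rw [Real.div_rpow hB₂0.le hB₁0.le, Real.rpow_sub hB₂0]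
    field_simp
  rw [key]
  set Q := t₂ / L₂ with hQdef
  clear_value Q
  have hQ1 : (1 : ℝ) ≤ Q := by rw [hQdef, le_div_iff₀ hL₂0]; linarith
  -- Factor 1
  have fac1 : (B₂ / B₁) ^ a₁ ≤ Real.exp R := by
    have hBB : B₂ / B₁ ≤ Real.exp (R / t₁) := by
      have h1 : B₂ / B₁ ≤ 1 + R / t₁ := by
        have e : B₂ / B₁ = (t₂ * L₁) / (t₁ * L₂) := by
          rw [hB₁def, hB₂def]; field_simp
        rw [e, div_le_iff₀ (by positivity)]
        have e2 : (1 + R / t₁) * (t₁ * L₂) = t₁ * L₂ + R * L₂ := by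
          field_simp
        rw [e2]
        nlinarith
      have h2 : 1 + R / t₁ ≤ Real.exp (R / t₁) := by
        have := Real.add_one_le_exp (R / t₁); linarith
      linarith
    calc (B₂ / B₁) ^ a₁ ≤ (Real.exp (R / t₁)) ^ a₁ :=
          Real.rpow_le_rpow (by positivity) hBB ha₁0
      _ = Real.exp (R / t₁ * a₁) := (Real.exp_mul _ _).symm
      _ ≤ Real.exp R := by
          apply Real.exp_le_exp.mpr
          have e3 : R / t₁ * a₁ = R * (1 - 1 / L₁) := by
            rw [ha₁def]; field_simp
          rw [e3]
          have h4 : 0 < 1 / L₁ := by positivity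
          have h5 : 1 / L₁ ≤ 1 := by rw [div_le_one hL₁0]; linarith
          nlinarith
  -- Factor 2
  have fac2 : B₂ ^ (a₂ - a₁) ≤ Real.exp (8 * R * Q) := by
    have hB₂1 : (1 : ℝ) ≤ B₂ := by
      rw [hB₂def, le_div_iff₀ hL₂0]; nlinarith
    have hda : a₂ - a₁ ≤ R := by
      have e : a₂ - a₁ = (t₂ - t₁) - (t₂ / L₂ - t₁ / L₁) := by
        rw [ha₁def, ha₂def]; field_simp; ring
      rw [e]; linarith
    have hlogB : Real.log B₂ ≤ 8 * Q := by
      have h1 : Real.log B₂ ≤ Real.log (2 * t₂) := by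
        apply Real.log_le_log hB₂0
        rw [hB₂def, div_le_iff₀ hL₂0]; nlinarith
      have h6 : 1 + L₂ ≤ 8 * Q := by
        rw [hQdef, ← mul_div_assoc, le_div_iff₀ hL₂0]
        nlinarith
      linarith
    calc B₂ ^ (a₂ - a₁) ≤ B₂ ^ R := Real.rpow_le_rpow_of_exponent_le hB₂1 hda
      _ = Real.exp (Real.log B₂ * R) := by rw [Real.rpow_def_of_pos hB₂0]
      _ ≤ Real.exp (8 * R * Q) := by
          apply Real.exp_le_exp.mpr
          have hR0 : (0:ℝ) < R := by linarith
          nlinarith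
  calc (B₂ / B₁) ^ a₁ * B₂ ^ (a₂ - a₁) ≤ Real.exp R * Real.exp (8 * R * Q) :=
        mul_le_mul fac1 fac2 (Real.rpow_nonneg hB₂0.le _) (Real.exp_pos _).le
    _ = Real.exp (R + 8 * R * Q) := (Real.exp_add _ _).symm
    _ ≤ Real.exp (9 * R * Q) := by
        apply Real.exp_le_exp.mpr
        have hR0 : (0:ℝ) < R := by linarith
        nlinarith
    _ = Real.exp (9 * R) ^ Q := by rw [← Real.exp_mul]
end

section
/- Let σ > 0 and define F(r, t) = (2t/log t)^{t(1 − 1/log t)} · r^{t/log t} for r > 0 and t > σ(e+1) + e. Then for every r ≥ 1 and every σ₀ ∈ [0, σ], one has F(r, t) ≤ F(r, t + σ₀). -/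
lemma hasDerivAt_div_log_aux {x : ℝ} (hx : 1 < x) :
    HasDerivAt (fun y => y / Real.log y) ((Real.log x - 1) / (Real.log x) ^ 2) x := by
  have hx0 : x ≠ 0 := by linarith
  have hlx : Real.log x ≠ 0 := ne_of_gt (Real.log_pos hx)
  have h := (hasDerivAt_id' (x := x)).div (Real.hasDerivAt_log hx0) hlx
  rw [mul_inv_cancel₀ hx0, one_mul] at h
  exact h

lemma div_log_mono {a b : ℝ} (ha : Real.exp 1 ≤ a) (hab : a ≤ b) :
    a / Real.log a ≤ b / Real.log b := by
  have h1 : (1 : ℝ) < Real.exp 1 := (by linarith [Real.add_one_le_exp 1] : (1:ℝ) < Real.exp 1)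
  have key : MonotoneOn (fun y => y / Real.log y) (Set.Ici (Real.exp 1)) := by
    apply monotoneOn_of_deriv_nonneg (convex_Ici _)
    · intro x hx
      have hx1 : 1 < x := lt_of_lt_of_le h1 hx
      exact ((hasDerivAt_div_log_aux hx1).continuousAt).continuousWithinAt
    · intro x hx
      rw [interior_Ici] at hx
      have hx1 : 1 < x := lt_trans h1 hx
      exact ((hasDerivAt_div_log_aux hx1).differentiableAt).differentiableWithinAt
    · intro x hx
      rw [interior_Ici] at hx
      have hx1 : 1 < x := lt_trans h1 hx
      rw [(hasDerivAt_div_log_aux hx1).deriv]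
      have hlog : 1 ≤ Real.log x := by
        rw [← Real.log_exp 1]
        exact Real.log_le_log (Real.exp_pos 1) hx.le
      apply div_nonneg (by linarith) (by positivity)
  exact key ha (le_trans ha hab) hab

lemma sub_div_log_mono {a b : ℝ} (ha : Real.exp 1 ≤ a) (hab : a ≤ b) :
    a - a / Real.log a ≤ b - b / Real.log b := by
  have h1 : (1 : ℝ) < Real.exp 1 := (by linarith [Real.add_one_le_exp 1] : (1:ℝ) < Real.exp 1)
  have key : MonotoneOn (fun y => y - y / Real.log y) (Set.Ici (Real.exp 1)) := by
    apply monotoneOn_of_deriv_nonneg (convex_Ici _)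
    · intro x hx
      have hx1 : 1 < x := lt_of_lt_of_le h1 hx
      exact (((hasDerivAt_id' (x := x)).sub (hasDerivAt_div_log_aux hx1)).continuousAt).continuousWithinAt
    · intro x hx
      rw [interior_Ici] at hx
      have hx1 : 1 < x := lt_trans h1 hx
      exact (((hasDerivAt_id' (x := x)).sub (hasDerivAt_div_log_aux hx1)).differentiableAt).differentiableWithinAt
    · intro x hx
      rw [interior_Ici] at hx
      have hx1 : 1 < x := lt_trans h1 hx
      rw [show (fun y : ℝ => y - y / Real.log y) = (fun x => x) - (fun y => y / Real.log y) from rfl, ((hasDerivAt_id' (x := x)).sub (hasDerivAt_div_log_aux hx1)).deriv]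
      have hlog : 0 < Real.log x := Real.log_pos hx1
      rw [sub_nonneg, div_le_one (by positivity)]
      nlinarith [sq_nonneg (Real.log x - 2)]
  exact key ha (le_trans ha hab) hab

theorem F_monotone_step (σ : ℝ) (hσ : 0 < σ) (r σ₀ t : ℝ)
    (hr : 1 ≤ r) (hσ₀ : 0 ≤ σ₀) (hσ₀' : σ₀ ≤ σ)
    (ht : σ * (Real.exp 1 + 1) + Real.exp 1 < t) :
    (2 * t / Real.log t) ^ (t * (1 - 1 / Real.log t)) * r ^ (t / Real.log t)
      ≤ (2 * (t + σ₀) / Real.log (t + σ₀)) ^ ((t + σ₀) * (1 - 1 / Real.log (t + σ₀)))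
          * r ^ ((t + σ₀) / Real.log (t + σ₀)) := by
  have he : (0 : ℝ) < Real.exp 1 := Real.exp_pos 1
  have het : Real.exp 1 < t := by nlinarith
  have het' : Real.exp 1 ≤ t + σ₀ := by linarith
  have ht1 : (1 : ℝ) < t := lt_trans ((by linarith [Real.add_one_le_exp 1] : (1:ℝ) < Real.exp 1)) het
  have ht1' : (1 : ℝ) < t + σ₀ := by linarith
  have hL : 1 ≤ Real.log t := by
    rw [← Real.log_exp 1]; exact Real.log_le_log he het.le
  have hL' : 1 ≤ Real.log (t + σ₀) := by
    rw [← Real.log_exp 1]; exact Real.log_le_log he het'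
  have hLpos : 0 < Real.log t := by linarith
  have hL'pos : 0 < Real.log (t + σ₀) := by linarith
  -- t / log t monotone
  have hdiv : t / Real.log t ≤ (t + σ₀) / Real.log (t + σ₀) :=
    div_log_mono het.le (by linarith)
  -- base comparison
  have hbase : 2 * t / Real.log t ≤ 2 * (t + σ₀) / Real.log (t + σ₀) := by
    rw [mul_div_assoc, mul_div_assoc]
    linarith
  have hbase0 : 0 ≤ 2 * t / Real.log t := by positivity
  have hbase1' : 1 ≤ 2 * (t + σ₀) / Real.log (t + σ₀) := by
    rw [le_div_iff₀ hL'pos, one_mul]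
    have := Real.log_lt_sub_one_of_pos (by linarith : (0:ℝ) < t + σ₀) (by linarith)
    linarith
  -- exponent comparison
  have hexp : t * (1 - 1 / Real.log t) ≤ (t + σ₀) * (1 - 1 / Real.log (t + σ₀)) := by
    have h := sub_div_log_mono het.le (by linarith : t ≤ t + σ₀)
    have e1 : t * (1 - 1 / Real.log t) = t - t / Real.log t := by
      field_simp
    have e2 : (t + σ₀) * (1 - 1 / Real.log (t + σ₀)) = (t + σ₀) - (t + σ₀) / Real.log (t + σ₀) := by
      field_simp
    rw [e1, e2]; exact h
  have hexp0 : 0 ≤ t * (1 - 1 / Real.log t) := by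
    have : 1 / Real.log t ≤ 1 := by
      rw [div_le_one hLpos]; exact hL
    nlinarith
  have h1 : (2 * t / Real.log t) ^ (t * (1 - 1 / Real.log t))
      ≤ (2 * (t + σ₀) / Real.log (t + σ₀)) ^ ((t + σ₀) * (1 - 1 / Real.log (t + σ₀))) := by
    calc (2 * t / Real.log t) ^ (t * (1 - 1 / Real.log t))
        ≤ (2 * (t + σ₀) / Real.log (t + σ₀)) ^ (t * (1 - 1 / Real.log t)) :=
          Real.rpow_le_rpow hbase0 hbase hexp0
      _ ≤ (2 * (t + σ₀) / Real.log (t + σ₀)) ^ ((t + σ₀) * (1 - 1 / Real.log (t + σ₀))) :=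
          Real.rpow_le_rpow_of_exponent_le hbase1' hexp
  have h2 : r ^ (t / Real.log t) ≤ r ^ ((t + σ₀) / Real.log (t + σ₀)) :=
    Real.rpow_le_rpow_of_exponent_le hr hdiv
  have hpow0 : 0 ≤ (2 * t / Real.log t) ^ (t * (1 - 1 / Real.log t)) :=
    Real.rpow_nonneg hbase0 _
  have hr0 : 0 ≤ r ^ ((t + σ₀) / Real.log (t + σ₀)) :=
    Real.rpow_nonneg (by linarith) _
  exact mul_le_mul h1 h2 (Real.rpow_nonneg (by linarith) _) (le_trans hpow0 h1)
end

section
/- Let σ > 0 and define F(r, t) = (2t/log t)^{t(1 − 1/log t)} · r^{t/log t} for r > 0 and t > σ(e+1) + e. Then for every r ∈ (0, 1] and every σ₀ ∈ [0, σ], one has F(r, t) ≤ F(r^{(e−1)/e}, t + σ₀). -/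
theorem F_step_small_r (σ : ℝ) (hσ : 0 < σ) (r σ₀ t : ℝ)
    (hr0 : 0 < r) (hr1 : r ≤ 1) (hσ₀ : 0 ≤ σ₀) (hσ₀' : σ₀ ≤ σ)
    (ht : σ * (Real.exp 1 + 1) + Real.exp 1 < t) :
    (2 * t / Real.log t) ^ (t * (1 - 1 / Real.log t)) * r ^ (t / Real.log t)
      ≤ (2 * (t + σ₀) / Real.log (t + σ₀)) ^ ((t + σ₀) * (1 - 1 / Real.log (t + σ₀)))
          * (r ^ ((Real.exp 1 - 1) / Real.exp 1)) ^ ((t + σ₀) / Real.log (t + σ₀)) := by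
  have he1 : (1:ℝ) < Real.exp 1 := by
    have := Real.exp_one_gt_d9; linarith
  have he0 : (0:ℝ) < Real.exp 1 := by linarith
  have het : Real.exp 1 < t := by nlinarith
  have ht0 : (0:ℝ) < t := by linarith
  have ht' : t ≤ t + σ₀ := by linarith
  have het' : Real.exp 1 < t + σ₀ := by linarith
  have hL1 : 1 < Real.log t := by
    rw [show (1:ℝ) = Real.log (Real.exp 1) from (Real.log_exp 1).symm]
    exact Real.log_lt_log (Real.exp_pos 1) het
  have hL1' : 1 < Real.log (t + σ₀) := by
    rw [show (1:ℝ) = Real.log (Real.exp 1) from (Real.log_exp 1).symm]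
    exact Real.log_lt_log (Real.exp_pos 1) het'
  have hL0 : 0 < Real.log t := by linarith
  have hL0' : 0 < Real.log (t + σ₀) := by linarith
  have hLL' : Real.log t ≤ Real.log (t + σ₀) := Real.log_le_log ht0 ht'
  -- Part A: exponent comparison for r
  have hexpA : (Real.exp 1 - 1) / Real.exp 1 * ((t + σ₀) / Real.log (t + σ₀))
      ≤ t / Real.log t := by
    have key : (Real.exp 1 - 1) / Real.exp 1 * (t + σ₀) ≤ t := by
      rw [div_mul_eq_mul_div, div_le_iff₀ he0]
      nlinarith [mul_le_mul_of_nonneg_left hσ₀' (by linarith : (0:ℝ) ≤ Real.exp 1 - 1)]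
    have h1 : (Real.exp 1 - 1) / Real.exp 1 * ((t + σ₀) / Real.log (t + σ₀))
        = ((Real.exp 1 - 1) / Real.exp 1 * (t + σ₀)) / Real.log (t + σ₀) := by ring
    rw [h1]
    exact div_le_div₀ ht0.le key hL0 hLL'
  have hA : r ^ (t / Real.log t)
      ≤ (r ^ ((Real.exp 1 - 1) / Real.exp 1)) ^ ((t + σ₀) / Real.log (t + σ₀)) := by
    rw [← Real.rpow_mul hr0.le]
    exact Real.rpow_le_rpow_of_exponent_ge hr0 hr1 hexpA
  -- Part B: base comparison
  have hB1 : (1:ℝ) ≤ 2 * t / Real.log t := by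
    rw [le_div_iff₀ hL0]
    have := Real.log_le_sub_one_of_pos ht0
    linarith
  have hBle : 2 * t / Real.log t ≤ 2 * (t + σ₀) / Real.log (t + σ₀) := by
    have hmono : Real.log (t + σ₀) / (t + σ₀) ≤ Real.log t / t :=
      Real.log_div_self_antitoneOn (by simpa using het.le) (by simpa using het'.le) ht'
    rw [div_le_div_iff₀ (by linarith : (0:ℝ) < t + σ₀) ht0] at hmono
    rw [div_le_div_iff₀ hL0 hL0']
    nlinarith
  have hexpB0 : 0 ≤ t * (1 - 1 / Real.log t) := by
    have : 1 / Real.log t ≤ 1 := by rw [div_le_one hL0]; linarith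
    nlinarith
  have hexpB : t * (1 - 1 / Real.log t) ≤ (t + σ₀) * (1 - 1 / Real.log (t + σ₀)) := by
    apply mul_le_mul ht' _ _ (by linarith)
    · have := one_div_le_one_div_of_le hL0 hLL'
      linarith
    · have : 1 / Real.log t ≤ 1 := by rw [div_le_one hL0]; linarith
      linarith
  have hB : (2 * t / Real.log t) ^ (t * (1 - 1 / Real.log t))
      ≤ (2 * (t + σ₀) / Real.log (t + σ₀)) ^ ((t + σ₀) * (1 - 1 / Real.log (t + σ₀))) :=
    le_trans (Real.rpow_le_rpow (by positivity) hBle hexpB0)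
      (Real.rpow_le_rpow_of_exponent_le (le_trans hB1 hBle) hexpB)
  exact mul_le_mul hB hA (Real.rpow_nonneg hr0.le _) (Real.rpow_nonneg (by positivity) _)
end

section
/- For every r₂ > 0 there exists r₁ > 0 and a constant C > 0 such that for all real s ≥ 10, inf_{t ≥ e} [ s^{−t} · (2t/log t)^{t(1 − 1/log t)} · r₁^{t/log t} ] ≤ C · r₂^s · s^{−s/2}. -/
theorem inf_estimate_forall_r2 (r₂ : ℝ) (hr₂ : 0 < r₂) :
    ∃ r₁ : ℝ, 0 < r₁ ∧ ∃ C : ℝ, 0 < C ∧ ∀ s : ℝ, 10 ≤ s →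
      sInf {x : ℝ | ∃ t : ℝ, Real.exp 1 ≤ t ∧
          x = s ^ (-t) * (2 * t / Real.log t) ^ (t * (1 - 1 / Real.log t))
                * r₁ ^ (t / Real.log t)}
        ≤ C * r₂ ^ s * s ^ (-(s / 2)) := by
  refine ⟨r₂ ^ 2, by positivity, 1, one_pos, fun s hs => ?_⟩
  have hs0 : (0:ℝ) < s := by linarith
  have hexp : Real.exp 1 < 3 := by
    have := Real.exp_one_lt_d9; linarith
  have hes : Real.exp 1 ≤ s ^ 2 := by nlinarith
  -- continuity of g(t) = 2t / log t on [e, s²]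
  have hcont : ContinuousOn (fun t : ℝ => 2 * t / Real.log t)
      (Set.Icc (Real.exp 1) (s ^ 2)) := by
    apply ContinuousOn.div
    · exact (continuous_const.mul continuous_id).continuousOn
    · apply Real.continuousOn_log.mono
      intro t ht
      simp only [Set.mem_compl_iff, Set.mem_singleton_iff]
      have : (0:ℝ) < Real.exp 1 := Real.exp_pos 1
      have ht1 := ht.1
      intro h; rw [h] at ht1; linarith
    · intro t ht
      have h1 : (1:ℝ) ≤ Real.log t := by
        calc (1:ℝ) = Real.log (Real.exp 1) := (Real.log_exp 1).symm
        _ ≤ Real.log t := Real.log_le_log (Real.exp_pos 1) ht.1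
      linarith
  -- endpoint values
  have hge : 2 * Real.exp 1 / Real.log (Real.exp 1) ≤ s := by
    rw [Real.log_exp]; simp; linarith
  have hlogs_pos : 0 < Real.log s := Real.log_pos (by linarith)
  have hlogs_lt : Real.log s < s := by
    have := Real.log_le_sub_one_of_pos hs0; linarith
  have hgs : s ≤ 2 * s ^ 2 / Real.log (s ^ 2) := by
    rw [show s ^ 2 = s * s by ring, Real.log_mul (ne_of_gt hs0) (ne_of_gt hs0)]
    rw [le_div_iff₀ (by linarith)]
    nlinarith
  -- IVT: find t with 2t / log t = s
  have hIVT := intermediate_value_Icc hes hcont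
  have hsmem : s ∈ Set.Icc (2 * Real.exp 1 / Real.log (Real.exp 1))
      (2 * s ^ 2 / Real.log (s ^ 2)) := ⟨hge, hgs⟩
  obtain ⟨t, htmem, ht⟩ := hIVT hsmem
  have hte : Real.exp 1 ≤ t := htmem.1
  have hlogt : (1:ℝ) ≤ Real.log t := by
    calc (1:ℝ) = Real.log (Real.exp 1) := (Real.log_exp 1).symm
    _ ≤ Real.log t := Real.log_le_log (Real.exp_pos 1) hte
  have hlogt0 : Real.log t ≠ 0 := by linarith
  have ht0 : (0:ℝ) < t := lt_of_lt_of_le (Real.exp_pos 1) hte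
  have htbase : 0 < 2 * t / Real.log t := by positivity
  have hts : 2 * t / Real.log t = s := ht
  have htl : t / Real.log t = s / 2 := by
    field_simp at hts ⊢; linarith
  -- the set is bounded below by 0
  have hbdd : BddBelow {x : ℝ | ∃ t : ℝ, Real.exp 1 ≤ t ∧
      x = s ^ (-t) * (2 * t / Real.log t) ^ (t * (1 - 1 / Real.log t))
            * (r₂ ^ 2) ^ (t / Real.log t)} := by
    refine ⟨0, fun x hx => ?_⟩
    obtain ⟨u, hu, rfl⟩ := hx
    have hu0 : (0:ℝ) < u := lt_of_lt_of_le (Real.exp_pos 1) hu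
    have hlogu : (1:ℝ) ≤ Real.log u := by
      calc (1:ℝ) = Real.log (Real.exp 1) := (Real.log_exp 1).symm
      _ ≤ Real.log u := Real.log_le_log (Real.exp_pos 1) hu
    have h1 : 0 < 2 * u / Real.log u := by positivity
    positivity
  -- membership of the chosen element
  have hmem : s ^ (-t) * (2 * t / Real.log t) ^ (t * (1 - 1 / Real.log t))
        * (r₂ ^ 2) ^ (t / Real.log t) ∈ {x : ℝ | ∃ t : ℝ, Real.exp 1 ≤ t ∧
      x = s ^ (-t) * (2 * t / Real.log t) ^ (t * (1 - 1 / Real.log t))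
            * (r₂ ^ 2) ^ (t / Real.log t)} := ⟨t, hte, rfl⟩
  have hle := csInf_le hbdd hmem
  -- compute the value of the chosen element
  have hval : s ^ (-t) * (2 * t / Real.log t) ^ (t * (1 - 1 / Real.log t))
        * (r₂ ^ 2) ^ (t / Real.log t) = 1 * r₂ ^ s * s ^ (-(s / 2)) := by
    rw [hts, htl]
    have h1 : s ^ (-t) * s ^ (t * (1 - 1 / Real.log t)) = s ^ (-(s / 2)) := by
      rw [← Real.rpow_add hs0]
      congr 1
      have : t * (1 - 1 / Real.log t) = t - t / Real.log t := by
        field_simp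
      rw [this, htl]; ring
    have h2 : (r₂ ^ 2) ^ (s / 2) = r₂ ^ s := by
      rw [← Real.rpow_natCast r₂ 2, ← Real.rpow_mul hr₂.le]
      congr 1; push_cast; ring
    rw [h1, h2]; ring
  rw [hval] at hle
  exact hle
end

section
/- For every r₁ > 0 there exists r₂ > 0 and a constant C > 0 such that for all real s ≥ 10, inf_{t ≥ e} [ s^{−t} · (2t/log t)^{t(1 − 1/log t)} · r₁^{t/log t} ] ≤ C · r₂^s · s^{−s/2}. -/
theorem inf_estimate_forall_r1 (r₁ : ℝ) (hr₁ : 0 < r₁) :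
    ∃ r₂ : ℝ, 0 < r₂ ∧ ∃ C : ℝ, 0 < C ∧ ∀ s : ℝ, 10 ≤ s →
      sInf {x : ℝ | ∃ t : ℝ, Real.exp 1 ≤ t ∧
          x = s ^ (-t) * (2 * t / Real.log t) ^ (t * (1 - 1 / Real.log t))
                * r₁ ^ (t / Real.log t)}
        ≤ C * r₂ ^ s * s ^ (-(s / 2)) := by
  refine ⟨Real.sqrt r₁, Real.sqrt_pos.mpr hr₁, 1, one_pos, fun s hs => ?_⟩
  have hs0 : (0:ℝ) < s := by linarith
  have he3 : Real.exp 1 < 3 := by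
    have := Real.exp_one_lt_d9
    linarith
  have he0 : (0:ℝ) < Real.exp 1 := Real.exp_pos 1
  have hab : Real.exp 1 ≤ s ^ 2 := by nlinarith
  -- continuity of f t = 2*t / log t on [e, s^2]
  set f : ℝ → ℝ := fun t => 2 * t / Real.log t with hf
  have hcont : ContinuousOn f (Set.Icc (Real.exp 1) (s ^ 2)) := by
    apply ContinuousOn.div
    · exact (continuous_const.mul continuous_id).continuousOn
    · apply Real.continuousOn_log.mono
      intro x hx
      simp only [Set.mem_compl_iff, Set.mem_singleton_iff]
      have : (0:ℝ) < x := lt_of_lt_of_le he0 hx.1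
      linarith
    · intro x hx
      have h1 : (1:ℝ) ≤ Real.log x := by
        have := Real.log_le_log he0 hx.1
        rwa [Real.log_exp] at this
      linarith
  have hfa : f (Real.exp 1) ≤ s := by
    simp only [hf, Real.log_exp]
    linarith
  have hfb : s ≤ f (s ^ 2) := by
    have hlogs : Real.log (s ^ 2) = 2 * Real.log s := by
      rw [Real.log_pow]; push_cast; ring
    have hls_pos : 0 < Real.log s := Real.log_pos (by linarith)
    have hls_lt : Real.log s < s := by
      have := Real.log_le_sub_one_of_pos hs0
      linarith
    simp only [hf, hlogs]
    rw [le_div_iff₀ (by linarith)]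
    nlinarith
  obtain ⟨t, htmem, htf⟩ := intermediate_value_Icc hab hcont ⟨hfa, hfb⟩
  have het : Real.exp 1 ≤ t := htmem.1
  have ht0 : (0:ℝ) < t := lt_of_lt_of_le he0 het
  have hlt : (1:ℝ) ≤ Real.log t := by
    have := Real.log_le_log he0 het
    rwa [Real.log_exp] at this
  have hlt0 : Real.log t ≠ 0 := by linarith
  have heq : 2 * t / Real.log t = s := htf
  have hkey : t / Real.log t = s / 2 := by
    field_simp at heq ⊢
    linarith
  -- the set element for this t
  have hmem : (Real.sqrt r₁) ^ s * s ^ (-(s / 2)) ∈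
      {x : ℝ | ∃ t : ℝ, Real.exp 1 ≤ t ∧
          x = s ^ (-t) * (2 * t / Real.log t) ^ (t * (1 - 1 / Real.log t))
                * r₁ ^ (t / Real.log t)} := by
    refine ⟨t, het, ?_⟩
    rw [heq, hkey]
    rw [← Real.rpow_add hs0]
    have hexp : -t + t * (1 - 1 / Real.log t) = -(t / Real.log t) := by
      field_simp
      ring
    rw [hexp, hkey]
    rw [Real.sqrt_eq_rpow, ← Real.rpow_mul hr₁.le]
    rw [show (1/2 : ℝ) * s = s / 2 by ring]
    ring
  have hbdd : BddBelow {x : ℝ | ∃ t : ℝ, Real.exp 1 ≤ t ∧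
          x = s ^ (-t) * (2 * t / Real.log t) ^ (t * (1 - 1 / Real.log t))
                * r₁ ^ (t / Real.log t)} := by
    refine ⟨0, fun x hx => ?_⟩
    obtain ⟨u, hu, hxe⟩ := hx
    rw [hxe]
    have hu0 : (0:ℝ) < u := lt_of_lt_of_le he0 hu
    have hlu : (0:ℝ) < Real.log u := by
      have := Real.log_le_log he0 hu
      rw [Real.log_exp] at this
      linarith
    positivity
  have := csInf_le hbdd hmem
  linarith [this]
end

section
/- Fix r > 0 and an integer t ≥ 0, and define f(s, r) = s^{2t} (2re)^s s^{−s} for s ≥ 1. Then there exists an increasing positive function θ on [0, ∞) and an integer t₀(r) > e such that for all integers t ≥ t₀(r), sup_{s ≥ 1} f(s, r) ≤ (2t/log t)^{2t(1 − 1/log t)} · (θ(r) r)^{2t/log t}. -/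
open Real

lemma tangent (T a s s₀ : ℝ) (hT : 0 ≤ T) (hs : 0 < s) (hs₀ : 0 < s₀) :
    (T - s) * Real.log s + s * a ≤ (T - s₀) * Real.log s₀ + s₀ * a
      + (-(Real.log s₀) + T / s₀ - 1 + a) * (s - s₀) := by
  have h1 : Real.log s - Real.log s₀ ≤ (s - s₀) / s₀ := by
    have h := Real.log_le_sub_one_of_pos (show 0 < s / s₀ by positivity)
    rw [Real.log_div hs.ne' hs₀.ne'] at h
    have : s / s₀ - 1 = (s - s₀) / s₀ := by field_simp
    linarith
  have h2 : s * Real.log s₀ - s * Real.log s ≤ s₀ - s := by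
    have h := Real.log_le_sub_one_of_pos (show 0 < s₀ / s by positivity)
    rw [Real.log_div hs₀.ne' hs.ne'] at h
    have h' := mul_le_mul_of_nonneg_left h hs.le
    have : s * (s₀ / s - 1) = s₀ - s := by field_simp
    nlinarith [h']
  have f1 : T * (Real.log s - Real.log s₀) ≤ T * ((s - s₀) / s₀) :=
    mul_le_mul_of_nonneg_left h1 hT
  have e1 : T / s₀ * (s - s₀) = T * ((s - s₀) / s₀) := by ring
  nlinarith [f1, h2]

lemma key (r u s : ℝ) (hr : 0 < r) (hs : 1 ≤ s) (hu : 1 < u)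
    (hL1 : 1 ≤ Real.log u)
    (hK0 : 0 ≤ Real.log (Real.log u) + 1 + Real.log r)
    (hK2 : (Real.log (Real.log u) + 1 + Real.log r)^2 ≤ Real.log u) :
    (2*u - s) * Real.log s + s * Real.log (2*r*Real.exp 1)
      ≤ (2*u - 2*u/Real.log u) * Real.log (2*u/Real.log u)
        + (2*u/Real.log u) * Real.log (Real.exp 5 * r) := by
  set L := Real.log u with hL
  set K := Real.log L + 1 + Real.log r with hK
  set δ := K / L with hδ
  set M := 2*u / L with hM
  set s₀ := (1+δ) * M with hs₀def
  have hL0 : 0 < L := by linarith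
  have hu0 : 0 < u := by linarith
  have hδ0 : 0 ≤ δ := div_nonneg hK0 hL0.le
  have hKL : K ≤ L := by nlinarith [sq_nonneg (K - 1)]
  have hδ1 : δ ≤ 1 := by rw [hδ]; exact div_le_one_of_le₀ hKL hL0.le
  have hKδ : K * δ ≤ 1 := by
    have : K * δ = K^2 / L := by rw [hδ]; ring
    rw [this]
    exact div_le_one_of_le₀ hK2 hL0.le
  have hM0 : 0 < M := by positivity
  have hs₀0 : 0 < s₀ := by positivity
  have logM : Real.log M = Real.log 2 + L - Real.log L := by
    rw [hM, Real.log_div (by positivity) hL0.ne', Real.log_mul (by norm_num) hu0.ne']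
  have logs₀ : Real.log s₀ = Real.log (1+δ) + Real.log M := by
    rw [hs₀def, Real.log_mul (by positivity) hM0.ne']
  have loga : Real.log (2*r*Real.exp 1) = Real.log 2 + Real.log r + 1 := by
    rw [Real.log_mul (by positivity) (Real.exp_pos 1).ne', Real.log_mul (by norm_num) hr.ne',
      Real.log_exp]
  have logc : Real.log (Real.exp 5 * r) = 5 + Real.log r := by
    rw [Real.log_mul (Real.exp_pos 5).ne' hr.ne', Real.log_exp]
  have hML : M * L = 2*u := by rw [hM, div_mul_cancel₀ _ hL0.ne']
  clear_value s₀ M δ K L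
  have h2us₀ : 2*u / s₀ = L / (1+δ) := by
    rw [hs₀def, hM]
    rw [eq_div_iff (by positivity : (1:ℝ)+δ ≠ 0)]
    field_simp
  have hlog1δ0 : 0 ≤ Real.log (1+δ) := Real.log_nonneg (by linarith)
  have hlog1δ : Real.log (1+δ) ≤ δ := by
    have := Real.log_le_sub_one_of_pos (show (0:ℝ) < 1+δ by linarith)
    linarith
  -- slope at s₀ is nonpositive
  have hLdiv : L - L / (1+δ) = K / (1+δ) := by
    rw [hδ]; field_simp; ring
  have hKdd : K / (1+δ) ≥ K - K*δ := by
    rw [ge_iff_le, sub_le_iff_le_add, div_add' _ _ _ (by positivity : (1:ℝ)+δ ≠ 0)]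
    rw [le_div_iff₀ (by positivity : (0:ℝ) < 1+δ)]
    nlinarith [mul_nonneg hK0 hδ0]
  set A := -(Real.log s₀) + 2*u/s₀ - 1 + Real.log (2*r*Real.exp 1) with hAdef
  clear_value A
  have hA : A ≤ 0 := by
    rw [hAdef, logs₀, logM, loga, h2us₀]
    linarith [hKdd, hKδ, hlog1δ0, hLdiv, hK]
  -- tangent bound
  have htan := tangent (2*u) (Real.log (2*r*Real.exp 1)) s s₀ (by linarith) (by linarith) hs₀0
  have hstep : (2*u - s) * Real.log s + s * Real.log (2*r*Real.exp 1)
      ≤ 2*u * Real.log s₀ + s₀ - 2*u := by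
    have hAs : A * s ≤ 0 := mul_nonpos_of_nonpos_of_nonneg hA (by linarith)
    have hA2 : A * (s - s₀) ≤ -(A * s₀) := by nlinarith [hAs]
    have hE : (2*u - s₀) * Real.log s₀ + s₀ * Real.log (2*r*Real.exp 1) - A * s₀
        = 2*u*Real.log s₀ + s₀ - 2*u := by
      rw [hAdef]; field_simp; ring
    rw [hAdef] at hA2 hE
    linarith [htan, hA2, hE]
  -- final comparison
  have hfin : 2*u * Real.log s₀ + s₀ - 2*u
      ≤ (2*u - M) * Real.log M + M * Real.log (Real.exp 5 * r) := by
    rw [logs₀, logc]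
    have h2uδ : 2*u*δ = M * K := by rw [hδ, hM]; ring
    have hlog2 : Real.log 2 ≤ 1 := by
      have := Real.log_le_sub_one_of_pos (show (0:ℝ) < 2 by norm_num); linarith
    have hblock : 2*u * Real.log (1+δ) ≤ M * K := by
      have h := mul_le_mul_of_nonneg_left hlog1δ (by linarith : (0:ℝ) ≤ 2*u)
      linarith [h, h2uδ.le, h2uδ.ge]
    have hMlogM : M * Real.log M = M*Real.log 2 + 2*u - M*Real.log L := by
      linear_combination M * logM + hML
    have hδM : δ * M ≤ M := by
      have := mul_le_mul_of_nonneg_right hδ1 hM0.le; linarith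
    have hMK : M * K = M*Real.log L + M + M*Real.log r := by rw [hK]; ring
    have hMl2 : M * Real.log 2 ≤ M := by
      have := mul_le_mul_of_nonneg_left hlog2 hM0.le; linarith
    have hs₀eq : s₀ = M + δ*M := by rw [hs₀def]; ring
    linarith [hblock, hMlogM, hδM, hMK, hMl2, hs₀eq.le, hs₀eq.ge]
  calc (2*u - s) * Real.log s + s * Real.log (2*r*Real.exp 1)
      ≤ 2*u * Real.log s₀ + s₀ - 2*u := hstep
    _ ≤ (2*u - M) * Real.log M + M * Real.log (Real.exp 5 * r) := hfin


lemma conds (r : ℝ) (hr : 0 < r) :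
    ∃ t₀ : ℕ, Real.exp 1 < (t₀ : ℝ) ∧ ∀ t : ℕ, t₀ ≤ t →
      1 < (t:ℝ) ∧ 1 ≤ Real.log t ∧ 0 ≤ Real.log (Real.log t) + 1 + Real.log r ∧
      (Real.log (Real.log t) + 1 + Real.log r)^2 ≤ Real.log t := by
  set B := 4096 + (2 + 2*|Real.log r|)^2 + Real.exp 1 / r with hB
  have hsq : (0:ℝ) ≤ (2 + 2*|Real.log r|)^2 := sq_nonneg _
  have her : (0:ℝ) < Real.exp 1 / r := by positivity
  have hB1 : (4096:ℝ) ≤ B := by rw [hB]; linarith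
  refine ⟨⌈Real.exp B⌉₊, ?_, ?_⟩
  · have h1 : Real.exp 1 < Real.exp B := Real.exp_lt_exp.mpr (by linarith)
    exact h1.trans_le (Nat.le_ceil _)
  intro t ht
  have htR : Real.exp B ≤ (t:ℝ) := (Nat.le_ceil _).trans (by exact_mod_cast ht)
  have hu1 : 1 < (t:ℝ) := lt_of_lt_of_le (by
      have : Real.exp 0 < Real.exp B := Real.exp_lt_exp.mpr (by linarith)
      simpa using this) htR
  have hu0 : (0:ℝ) < t := by linarith
  have hLB : B ≤ Real.log t := by
    have := Real.log_le_log (Real.exp_pos B) htR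
    rwa [Real.log_exp] at this
  set L := Real.log t with hLdef
  have hL1 : 1 ≤ L := by linarith
  have hL0 : (0:ℝ) < L := by linarith
  constructor
  · exact hu1
  refine ⟨hL1, ?_, ?_⟩
  · -- K ≥ 0 : from L ≥ exp 1 / r
    have h1 : Real.exp 1 / r ≤ L := by rw [hB] at hLB; linarith
    have h2 : Real.log (Real.exp 1 / r) ≤ Real.log L := Real.log_le_log (by positivity) h1
    rw [Real.log_div (Real.exp_ne_zero 1) hr.ne', Real.log_exp] at h2
    linarith
  · -- K^2 ≤ L
    set q := Real.sqrt (Real.sqrt L) with hq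
    have hsL0 : (0:ℝ) ≤ Real.sqrt L := Real.sqrt_nonneg _
    have hq2 : q^2 = Real.sqrt L := Real.sq_sqrt hsL0
    have hsL2 : (Real.sqrt L)^2 = L := Real.sq_sqrt hL0.le
    have hlogL : Real.log L = 4 * Real.log q := by
      rw [hq, Real.log_sqrt hsL0, Real.log_sqrt hL0.le]; ring
    have hq0 : 0 < q := Real.sqrt_pos.mpr (Real.sqrt_pos.mpr hL0)
    have hlq : Real.log q ≤ q - 1 := by linarith [Real.log_le_sub_one_of_pos hq0]
    -- sqrt L ≥ 64
    have h4096 : (4096:ℝ) ≤ L := by linarith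
    have hsL64 : (64:ℝ) ≤ Real.sqrt L := by
      have : Real.sqrt 4096 ≤ Real.sqrt L := Real.sqrt_le_sqrt h4096
      have h64 : Real.sqrt 4096 = 64 := by
        rw [show (4096:ℝ) = 64^2 by norm_num, Real.sqrt_sq (by norm_num : (0:ℝ) ≤ 64)]
      linarith
    have hq8 : (8:ℝ) ≤ q := by
      have : Real.sqrt 64 ≤ q := by rw [hq]; exact Real.sqrt_le_sqrt hsL64
      have h8 : Real.sqrt 64 = 8 := by
        rw [show (64:ℝ) = 8^2 by norm_num, Real.sqrt_sq (by norm_num : (0:ℝ) ≤ 8)]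
      linarith
    -- sqrt L ≥ 2 + 2|log r|
    have hsLr : 2 + 2*|Real.log r| ≤ Real.sqrt L := by
      have h1 : (2 + 2*|Real.log r|)^2 ≤ L := by rw [hB] at hLB; linarith
      have := Real.sqrt_le_sqrt h1
      rwa [Real.sqrt_sq (by positivity : (0:ℝ) ≤ 2 + 2*|Real.log r|)] at this
    -- K ≤ sqrt L
    have habs : Real.log r ≤ |Real.log r| := le_abs_self _
    have hK : Real.log L + 1 + Real.log r ≤ Real.sqrt L := by
      have h1 : Real.log L + 1 + Real.log r ≤ 4*q + |Real.log r| - 3 := by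
        rw [hlogL]; linarith
      have h2 : 4*q ≤ q^2 / 2 := by nlinarith
      have h3 : |Real.log r| ≤ q^2 / 2 := by rw [hq2]; linarith
      nlinarith
    have hK0 : 0 ≤ Real.log L + 1 + Real.log r := by
      have h1 : Real.exp 1 / r ≤ L := by rw [hB] at hLB; linarith
      have h2 : Real.log (Real.exp 1 / r) ≤ Real.log L := Real.log_le_log (by positivity) h1
      rw [Real.log_div (Real.exp_ne_zero 1) hr.ne', Real.log_exp] at h2
      linarith
    nlinarith [hK, hK0, hsL2]


theorem sup_f_estimate_int (r : ℝ) (hr : 0 < r) :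
    ∃ θ : ℝ → ℝ, (∀ x ∈ Set.Ici (0 : ℝ), 0 < θ x) ∧ MonotoneOn θ (Set.Ici 0) ∧
      ∃ t₀ : ℕ, Real.exp 1 < (t₀ : ℝ) ∧
        ∀ t : ℕ, t₀ ≤ t → ∀ s : ℝ, 1 ≤ s →
          s ^ (2 * (t : ℝ)) * (2 * r * Real.exp 1) ^ s * s ^ (-s)
            ≤ (2 * (t : ℝ) / Real.log t) ^ (2 * (t : ℝ) * (1 - 1 / Real.log t))
                * (θ r * r) ^ (2 * (t : ℝ) / Real.log t) := by
  obtain ⟨t₀, ht₀, hcond⟩ := conds r hr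
  refine ⟨fun _ => Real.exp 5, fun x _ => Real.exp_pos 5, monotoneOn_const, t₀, ht₀, ?_⟩
  intro t ht s hs
  obtain ⟨hu1, hL1, hK0, hK2⟩ := hcond t ht
  have hkey := key r (t:ℝ) s hr hs hu1 hL1 hK0 hK2
  have hs0 : (0:ℝ) < s := by linarith
  have ha0 : (0:ℝ) < 2*r*Real.exp 1 := by positivity
  have hL0 : (0:ℝ) < Real.log t := by linarith
  have hu0 : (0:ℝ) < (t:ℝ) := by linarith
  have hM0 : (0:ℝ) < 2*(t:ℝ)/Real.log t := by positivity
  have hc0 : (0:ℝ) < Real.exp 5 * r := by positivity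
  rw [Real.rpow_def_of_pos hs0, Real.rpow_def_of_pos ha0, Real.rpow_def_of_pos hs0,
    Real.rpow_def_of_pos hM0, Real.rpow_def_of_pos hc0, ← Real.exp_add, ← Real.exp_add, ← Real.exp_add]
  apply Real.exp_le_exp.mpr
  calc Real.log s * (2*(t:ℝ)) + Real.log (2*r*Real.exp 1) * s + Real.log s * (-s)
      = (2*(t:ℝ) - s) * Real.log s + s * Real.log (2*r*Real.exp 1) := by ring
    _ ≤ (2*(t:ℝ) - 2*(t:ℝ)/Real.log t) * Real.log (2*(t:ℝ)/Real.log t)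
        + (2*(t:ℝ)/Real.log t) * Real.log (Real.exp 5 * r) := hkey
    _ = Real.log (2*(t:ℝ)/Real.log t) * (2*(t:ℝ)*(1 - 1/Real.log t))
        + Real.log (Real.exp 5 * r) * (2*(t:ℝ)/Real.log t) := by ring
end

section
/- Fix r > 0 and real t ≥ 0, and define f(s, r) = s^{2t} (2re)^s s^{−s} for s ≥ 1. Then there exists an increasing positive function θ on [0, ∞) and t₀(r) > e such that for all real t ≥ t₀(r), sup_{s ≥ 1} f(s, r) ≤ (2t/log t)^{2t(1 − 1/log t)} · (θ(r) r + (θ(r) r)^{(e−1)/e})^{2t/log t}. -/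
lemma log_le_div_e {x : ℝ} (hx : 0 < x) : Real.log x ≤ x / Real.exp 1 := by
  have h := Real.log_le_sub_one_of_pos (div_pos hx (Real.exp_pos 1))
  rw [Real.log_div hx.ne' (Real.exp_ne_zero 1), Real.log_exp] at h
  linarith

lemma log_quad {u : ℝ} (hu : 1 ≤ u) : Real.log u ≤ (u ^ 2 - 1) / (2 * u) := by
  have hupos : (0:ℝ) < u := by linarith
  have hx : 0 ≤ (u ^ 2 - 1) / (2 * u) := by
    apply div_nonneg _ (by linarith)
    nlinarith
  have h := Real.quadratic_le_exp_of_nonneg hx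
  rw [Real.log_le_iff_le_exp hupos]
  refine le_trans ?_ h
  have hid : 1 + (u ^ 2 - 1) / (2 * u) + ((u ^ 2 - 1) / (2 * u)) ^ 2 / 2 - u
      = (u - 1) ^ 4 / (8 * u ^ 2) := by
    field_simp
    ring
  nlinarith [div_nonneg (by positivity : (0:ℝ) ≤ (u-1)^4) (by positivity : (0:ℝ) ≤ 8 * u ^ 2)]

set_option maxHeartbeats 1000000 in
lemma G_bound (a L u : ℝ) (ha : 0 < a) (hL : 9 ≤ L) (hu : 0 < u) :
    L * (Real.log u + 1 - u) + (u - 1) * Real.log (L / 2)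
      + u * Real.log a - u * Real.log u ≤ a + |Real.log a| + 2 := by
  have he : (2.7:ℝ) < Real.exp 1 := by
    have := Real.exp_one_gt_d9
    norm_num at this ⊢
    linarith
  have hL2 : (0:ℝ) < L / 2 := by linarith
  set m := Real.log (L / 2) with hm
  have hm0 : 0 ≤ m := Real.log_nonneg (by linarith)
  -- m ≤ L/4
  have hm4 : m ≤ L / 4 := by
    have h1 : m ≤ (L / 2) / Real.exp 1 := log_le_div_e hL2
    have h2 : (L / 2) / Real.exp 1 ≤ (L / 2) / 2 :=
      div_le_div_of_nonneg_left (by linarith) (by norm_num) (by linarith)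
    linarith
  -- m ^ 2 ≤ L
  have hm2 : m ^ 2 ≤ L := by
    have hsq : Real.sqrt (L / 2) ^ 2 = L / 2 := Real.sq_sqrt hL2.le
    have hsp : 0 < Real.sqrt (L / 2) := Real.sqrt_pos.mpr hL2
    have h1 : m = 2 * Real.log (Real.sqrt (L / 2)) := by
      rw [Real.log_sqrt hL2.le]; ring
    have h2 : Real.log (Real.sqrt (L / 2)) ≤ Real.sqrt (L / 2) / Real.exp 1 := log_le_div_e hsp
    have h3 : m ≤ 2 * Real.sqrt (L / 2) / Real.exp 1 := by
      rw [h1, show 2 * Real.sqrt (L / 2) / Real.exp 1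
        = 2 * (Real.sqrt (L / 2) / Real.exp 1) from by ring]
      linarith
    have h4 : m ^ 2 ≤ (2 * Real.sqrt (L / 2) / Real.exp 1) ^ 2 := by
      apply sq_le_sq' (by nlinarith [Real.sqrt_nonneg (L/2), Real.exp_pos 1]) h3
    have h5 : (2 * Real.sqrt (L / 2) / Real.exp 1) ^ 2 = 4 * (L / 2) / Real.exp 1 ^ 2 := by
      rw [div_pow, mul_pow, hsq]; norm_num
    have he2 : (4:ℝ) ≤ Real.exp 1 ^ 2 := by nlinarith
    have h6 : 4 * (L / 2) / Real.exp 1 ^ 2 ≤ 4 * (L / 2) / 4 :=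
      div_le_div_of_nonneg_left (by linarith) (by norm_num) he2
    linarith
  -- u * log a - u * log u ≤ a
  have hterm : u * Real.log a - u * Real.log u ≤ a := by
    have h1 : Real.log (a / u) ≤ (a / u) / Real.exp 1 := log_le_div_e (div_pos ha hu)
    rw [Real.log_div ha.ne' hu.ne'] at h1
    have h2 : u * (Real.log a - Real.log u) ≤ u * ((a / u) / Real.exp 1) :=
      mul_le_mul_of_nonneg_left h1 hu.le
    have h3 : u * ((a / u) / Real.exp 1) = a / Real.exp 1 := by
      field_simp
    have h4 : a / Real.exp 1 ≤ a := by
      rw [div_le_iff₀ (Real.exp_pos 1)]; nlinarith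
    nlinarith
  have habs : 0 ≤ |Real.log a| := abs_nonneg _
  rcases le_or_gt u 1 with hu1 | hu1
  · -- u ≤ 1
    have h1 : Real.log u ≤ u - 1 := Real.log_le_sub_one_of_pos hu
    have h2 : L * (Real.log u + 1 - u) ≤ 0 :=
      mul_nonpos_of_nonneg_of_nonpos (by linarith) (by linarith)
    have h3 : (u - 1) * m ≤ 0 := mul_nonpos_of_nonpos_of_nonneg (by linarith) hm0
    have h4 : u * Real.log a ≤ |Real.log a| := by
      calc u * Real.log a ≤ u * |Real.log a| :=
            mul_le_mul_of_nonneg_left (le_abs_self _) hu.le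
        _ ≤ 1 * |Real.log a| := mul_le_mul_of_nonneg_right hu1 habs
        _ = |Real.log a| := one_mul _
    have h5 : -(u * Real.log u) ≤ 1 := by
      have h6 : Real.log u⁻¹ ≤ u⁻¹ / Real.exp 1 := log_le_div_e (by positivity)
      rw [Real.log_inv] at h6
      have h7 : u * (-Real.log u) ≤ u * (u⁻¹ / Real.exp 1) :=
        mul_le_mul_of_nonneg_left h6 hu.le
      have h8 : u * (u⁻¹ / Real.exp 1) = 1 / Real.exp 1 := by
        field_simp
      have h9 : 1 / Real.exp 1 ≤ 1 := by
        rw [div_le_one (Real.exp_pos 1)]; linarith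
      nlinarith
    linarith
  · -- 1 < u
    have hq := log_quad hu1.le
    have h1 : Real.log u + 1 - u ≤ -((u - 1) ^ 2 / (2 * u)) := by
      have hid : (u ^ 2 - 1) / (2 * u) + 1 - u = -((u - 1) ^ 2 / (2 * u)) := by
        field_simp; ring
      linarith
    have h2 : L * (Real.log u + 1 - u) ≤ L * (-((u - 1) ^ 2 / (2 * u))) :=
      mul_le_mul_of_nonneg_left h1 (by linarith)
    have key : L * (Real.log u + 1 - u) + (u - 1) * m ≤ 2 := by
      rcases le_or_gt u 2 with hu2 | hu2
      · -- 1 < u ≤ 2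
        have h3 : L * (u - 1) ^ 2 / 4 ≤ L * (u - 1) ^ 2 / (2 * u) :=
          div_le_div_of_nonneg_left (by positivity) (by linarith) (by linarith)
        have h4 : 4 * ((u - 1) * m) * L ≤ L ^ 2 * (u - 1) ^ 2 + 4 * m ^ 2 := by
          nlinarith [sq_nonneg (L * (u - 1) - 2 * m)]
        have h5 : (u - 1) * m - L * (u - 1) ^ 2 / 4 ≤ 1 := by
          nlinarith
        have h6 : L * (-((u - 1) ^ 2 / (2 * u))) = -(L * (u - 1) ^ 2 / (2 * u)) := by
          ring
        linarith
      · -- u ≥ 2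
        have h3 : (u - 1) / 4 ≤ (u - 1) ^ 2 / (2 * u) := by
          rw [div_le_div_iff₀ (by norm_num) (by linarith)]
          nlinarith
        have h4 : (u - 1) * m ≤ (u - 1) * (L / 4) :=
          mul_le_mul_of_nonneg_left hm4 (by linarith)
        have h5 : L * ((u - 1) / 4) ≤ L * ((u - 1) ^ 2 / (2 * u)) :=
          mul_le_mul_of_nonneg_left h3 (by linarith)
        have h6 : L * (-((u - 1) ^ 2 / (2 * u))) = -(L * ((u - 1) ^ 2 / (2 * u))) := by ring
        have h7 : (u - 1) * (L / 4) = L * ((u - 1) / 4) := by ring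
        linarith
    linarith [key, hterm, habs, ha]

lemma main_ineq (a t s : ℝ) (ha : 0 < a) (ht : Real.exp 9 ≤ t) (hs : 0 < s) :
    Real.log s * (2 * t) + Real.log a * s + Real.log s * (-s)
      ≤ Real.log (2 * t / Real.log t) * (2 * t - 2 * t / Real.log t)
        + (a + |Real.log a| + 2) * (2 * t / Real.log t) := by
  have ht0 : 0 < t := lt_of_lt_of_le (Real.exp_pos 9) ht
  have hL : 9 ≤ Real.log t := (Real.le_log_iff_exp_le ht0).mpr ht
  set L := Real.log t with hLdef
  have hL0 : 0 < L := by linarith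
  set s₀ : ℝ := 2 * t / L with hs₀def
  have hs₀ : 0 < s₀ := by positivity
  set u : ℝ := s / s₀ with hudef
  have hu : 0 < u := by positivity
  set m : ℝ := Real.log (L / 2) with hmdef
  have hG := G_bound a L u ha hL hu
  have hlogu : Real.log u = Real.log s - Real.log s₀ := Real.log_div hs.ne' hs₀.ne'
  have hlog₀ : Real.log s₀ = L - m := by
    rw [hs₀def, hmdef, Real.log_div (by positivity) hL0.ne',
      Real.log_mul two_ne_zero ht0.ne', Real.log_div hL0.ne' two_ne_zero]
    ring
  rw [hlogu, hlog₀] at hG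
  have hG2 := mul_le_mul_of_nonneg_left hG hs₀.le
  have hid : s₀ * (L * (Real.log s - (L - m) + 1 - u) + (u - 1) * m
        + u * Real.log a - u * (Real.log s - (L - m)))
      = Real.log s * (2 * t) + Real.log a * s + Real.log s * (-s)
        - (L - m) * (2 * t - s₀) := by
    rw [hudef, hs₀def]
    field_simp
    ring
  have hgoal : Real.log (2 * t / L) = L - m := hlog₀
  rw [hgoal]
  linarith

theorem sup_f_estimate_real (r : ℝ) (hr : 0 < r) :
    ∃ θ : ℝ → ℝ, (∀ x ∈ Set.Ici (0 : ℝ), 0 < θ x) ∧ MonotoneOn θ (Set.Ici 0) ∧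
      ∃ t₀ : ℝ, Real.exp 1 < t₀ ∧
        ∀ t : ℝ, t₀ ≤ t → ∀ s : ℝ, 1 ≤ s →
          s ^ (2 * t) * (2 * r * Real.exp 1) ^ s * s ^ (-s)
            ≤ (2 * t / Real.log t) ^ (2 * t * (1 - 1 / Real.log t))
                * (θ r * r + (θ r * r) ^ ((Real.exp 1 - 1) / Real.exp 1))
                    ^ (2 * t / Real.log t) := by
  set a : ℝ := 2 * r * Real.exp 1 with hadef
  have ha : 0 < a := by positivity
  set K : ℝ := a + |Real.log a| + 2 with hKdef
  refine ⟨fun _ => Real.exp K / r, fun x _ => by positivity, monotoneOn_const,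
    Real.exp 9, ?_, ?_⟩
  · exact Real.exp_lt_exp.mpr (by norm_num)
  intro t ht s hs1
  have ht0 : 0 < t := lt_of_lt_of_le (Real.exp_pos 9) ht
  have hL : 9 ≤ Real.log t := (Real.le_log_iff_exp_le ht0).mpr ht
  have hL0 : 0 < Real.log t := by linarith
  have hs : 0 < s := by linarith
  have hC : Real.exp K / r * r = Real.exp K := div_mul_cancel₀ _ hr.ne'
  rw [hC]
  set s₀ : ℝ := 2 * t / Real.log t with hs₀def
  have hs₀ : 0 < s₀ := by positivity
  set B : ℝ := Real.exp K + Real.exp K ^ ((Real.exp 1 - 1) / Real.exp 1) with hBdef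
  have hB1 : Real.exp K ≤ B :=
    le_add_of_nonneg_right (Real.rpow_nonneg (Real.exp_pos K).le _)
  have hBpos : 0 < B := lt_of_lt_of_le (Real.exp_pos K) hB1
  have hlogB : K ≤ Real.log B := (Real.le_log_iff_exp_le hBpos).mpr hB1
  rw [Real.rpow_def_of_pos hs, Real.rpow_def_of_pos ha, Real.rpow_def_of_pos hs,
    Real.rpow_def_of_pos hs₀, Real.rpow_def_of_pos hBpos, ← Real.exp_add, ← Real.exp_add, ← Real.exp_add,
    Real.exp_le_exp]
  have hexp : 2 * t * (1 - 1 / Real.log t) = 2 * t - s₀ := by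
    rw [hs₀def]; field_simp
  rw [hexp]
  have hmain := main_ineq a t s ha ht hs
  have hBs : K * s₀ ≤ Real.log B * s₀ := mul_le_mul_of_nonneg_right hlogB hs₀.le
  have h1 : Real.log s₀ * (2 * t - s₀) + K * s₀
      ≤ Real.log s₀ * (2 * t - s₀) + Real.log B * s₀ := by linarith
  calc Real.log s * (2 * t) + Real.log a * s + Real.log s * (-s)
      ≤ Real.log s₀ * (2 * t - s₀) + K * s₀ := by
        rw [hs₀def, hKdef]; exact hmain
    _ ≤ Real.log s₀ * (2 * t - s₀) + Real.log B * s₀ := h1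
end
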